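/- For every unit u of the Laurent polynomial ring ℂ[T,T⁻¹] satisfying u·σ(u) = 1, there exists a unit c of ℂ[T,T⁻¹] with u = c⁻¹·σ(c). -/

import Mathlib

noncomputable section

open LaurentPolynomial Polynomial Complex

lemma aux_unit_form (u : (LaurentPolynomial ℂ)ˣ) :
    ∃ (a : ℂ) (k : ℤ), a ≠ 0 ∧
      (u : LaurentPolynomial ℂ) = LaurentPolynomial.C a * T k := by
  obtain ⟨n, p, hp⟩ := exists_T_pow (u : LaurentPolynomial ℂ)
  obtain ⟨m, q, hq⟩ := exists_T_pow ((u⁻¹ : (LaurentPolynomial ℂ)ˣ) : LaurentPolynomial ℂ)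
  have huv : (u : LaurentPolynomial ℂ) * ((u⁻¹ : (LaurentPolynomial ℂ)ˣ) : LaurentPolynomial ℂ)
      = 1 := by exact_mod_cast u.mul_inv
  have hpq : p * q = X ^ (n + m) := by
    apply Polynomial.toLaurent_injective
    rw [map_mul, hp, hq, Polynomial.toLaurent_X_pow]
    calc (u : LaurentPolynomial ℂ) * T (n : ℤ)
          * (((u⁻¹ : (LaurentPolynomial ℂ)ˣ) : LaurentPolynomial ℂ) * T (m : ℤ))
        = ((u : LaurentPolynomial ℂ) * ((u⁻¹ : (LaurentPolynomial ℂ)ˣ) : LaurentPolynomial ℂ))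
          * (T (n : ℤ) * T (m : ℤ)) := by ring
      _ = T ((n : ℤ) + m) := by rw [huv, one_mul, ← T_add]
      _ = T ((n + m : ℕ) : ℤ) := by push_cast; ring_nf
  have hdvd : p ∣ X ^ (n + m) := ⟨q, hpq.symm⟩
  obtain ⟨i, -, hassoc⟩ := (dvd_prime_pow Polynomial.prime_X (n + m)).mp hdvd
  obtain ⟨v, hv⟩ := hassoc.symm
  obtain ⟨a, ha, hCa⟩ := Polynomial.isUnit_iff.mp v.isUnit
  refine ⟨a, (i : ℤ) - n, ha.ne_zero, ?_⟩
  have hu : (u : LaurentPolynomial ℂ) = toLaurent p * T (-(n : ℤ)) := by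
    rw [hp, mul_T_assoc]; simp
  rw [hu, ← hv, ← hCa, map_mul, Polynomial.toLaurent_X_pow, Polynomial.toLaurent_C,
    mul_comm (T (i : ℤ)), mul_T_assoc, sub_eq_add_neg]

lemma aux_sigma_T (σ : LaurentPolynomial ℂ →+* LaurentPolynomial ℂ)
    (hσT : σ (T 1) = -T (-1)) (k : ℤ) :
    σ (T k) = LaurentPolynomial.C ((-1 : ℂ) ^ k) * T (-k) := by
  have hneg : σ (T (-1)) = -T 1 := by
    have h1 : σ (T 1) * σ (T (-1)) = 1 := by
      rw [← map_mul, ← T_add]; norm_num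
    have h2 : (-T (-1) : LaurentPolynomial ℂ) * (-T 1) = 1 := by
      rw [neg_mul_neg, ← T_add]; norm_num
    have h3 := h1.trans h2.symm
    rw [hσT] at h3
    have hunit : IsUnit (-T (-1) : LaurentPolynomial ℂ) := (isUnit_T (-1)).neg
    exact hunit.mul_left_cancel h3
  induction k using Int.induction_on with
  | zero => simp
  | succ k ih =>
      rw [T_add, map_mul, ih, hσT,
        zpow_add₀ (by norm_num : (-1 : ℂ) ≠ 0) (k : ℤ) 1, zpow_one]
      rw [map_mul, map_neg, map_one, show -((k : ℤ) + 1) = -(k : ℤ) + (-1) from by ring,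
        T_add]
      ring
  | pred k ih =>
      rw [show (-(k : ℤ) - 1) = (-(k : ℤ)) + (-1) from by ring, T_add, map_mul, ih, hneg,
        zpow_add₀ (by norm_num : (-1 : ℂ) ≠ 0) (-(k : ℤ)) (-1)]
      rw [map_mul, show ((-1 : ℂ) ^ (-1 : ℤ)) = -1 from by norm_num, map_neg, map_one,
        show -(-(k : ℤ) + (-1)) = -(-(k : ℤ)) + 1 from by ring, T_add]
      ring

lemma aux_C_inj {x y : ℂ} (h : LaurentPolynomial.C x = LaurentPolynomial.C y) : x = y := by
  have := congrArg (fun f : LaurentPolynomial ℂ => f.coeff 0) h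
  simpa using this


/-- Let `σ` be the ring involution of the Laurent polynomial ring `ℂ[T,T⁻¹]`
determined by applying complex conjugation to coefficients and sending `T ↦ −T⁻¹`
(such a ring homomorphism is unique, being determined by its values on constants and
on `T`).  For every unit `u` of `ℂ[T,T⁻¹]` satisfying `u·σ(u) = 1`, there exists a
unit `c` of `ℂ[T,T⁻¹]` with `u = c⁻¹·σ(c)`. -/
theorem statement_3 (σ : LaurentPolynomial ℂ →+* LaurentPolynomial ℂ)
    (hσC : ∀ a : ℂ, σ (LaurentPolynomial.C a) = LaurentPolynomial.C (starRingEnd ℂ a))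
    (hσT : σ (LaurentPolynomial.T 1) = -LaurentPolynomial.T (-1))
    (u : (LaurentPolynomial ℂ)ˣ)
    (hu : (u : LaurentPolynomial ℂ) * σ u = 1) :
    ∃ c : (LaurentPolynomial ℂ)ˣ,
      (u : LaurentPolynomial ℂ) = (↑c⁻¹ : LaurentPolynomial ℂ) * σ c := by
  obtain ⟨a, k, ha, hua⟩ := aux_unit_form u
  -- compute the scalar equation
  have hscal : a * (starRingEnd ℂ a * (-1 : ℂ) ^ k) = 1 := by
    apply aux_C_inj
    have : σ (u : LaurentPolynomial ℂ)
        = LaurentPolynomial.C (starRingEnd ℂ a * (-1 : ℂ) ^ k) * T (-k) := by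
      rw [hua, map_mul, hσC, aux_sigma_T σ hσT, map_mul]
      ring
    calc LaurentPolynomial.C (a * (starRingEnd ℂ a * (-1 : ℂ) ^ k))
        = (LaurentPolynomial.C a * T k) * (LaurentPolynomial.C (starRingEnd ℂ a * (-1 : ℂ) ^ k)
            * T (-k)) := by
          rw [map_mul]
          calc LaurentPolynomial.C a * LaurentPolynomial.C (starRingEnd ℂ a * (-1:ℂ)^k)
              = LaurentPolynomial.C a * LaurentPolynomial.C (starRingEnd ℂ a * (-1:ℂ)^k)
                * (T k * T (-k)) := by rw [← T_add]; norm_num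
            _ = _ := by ring
      _ = (u : LaurentPolynomial ℂ) * σ u := by rw [← hua, ← this]
      _ = 1 := hu
      _ = LaurentPolynomial.C 1 := by simp
  -- k is even
  rcases Int.even_or_odd k with hk | hk
  · obtain ⟨m, hm⟩ := hk
    have he : ((-1 : ℂ) ^ k) = (-1 : ℂ) ^ m * (-1 : ℂ) ^ m := by
      rw [hm, zpow_add₀ (by norm_num : (-1 : ℂ) ≠ 0)]
    set e : ℂ := (-1 : ℂ) ^ m with hedef
    have he2 : e * e = 1 := by
      rw [hedef, ← zpow_add₀ (by norm_num : (-1 : ℂ) ≠ 0)]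
      exact Even.neg_one_zpow ⟨m, rfl⟩
    have hconje : starRingEnd ℂ e = e := by
      rw [hedef, map_zpow₀]; norm_num
    have he0 : e ≠ 0 := by
      intro h; rw [h] at he2; simp at he2
    have haa : a * starRingEnd ℂ a = 1 := by
      have h := hscal
      rw [he, he2, mul_one] at h
      exact h
    -- choose square root b of conj a * e
    obtain ⟨b, hb⟩ := IsAlgClosed.exists_pow_nat_eq (starRingEnd ℂ a * e) (n := 2) (by norm_num)
    have hb2 : b * b = starRingEnd ℂ a * e := by rw [← hb]; ring
    have hb0 : b ≠ 0 := by
      intro h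
      rw [h, mul_zero] at hb2
      have ha' : starRingEnd ℂ a ≠ 0 := by simpa using ha
      exact (mul_ne_zero ha' he0) hb2.symm
    -- conj b * b = 1
    have hcb : starRingEnd ℂ b * b = 1 := by
      have hsq : (starRingEnd ℂ b * b) * (starRingEnd ℂ b * b) = 1 := by
        have h1 : starRingEnd ℂ b * starRingEnd ℂ b = a * e := by
          rw [← map_mul, hb2, map_mul, hconje, Complex.conj_conj]
        calc (starRingEnd ℂ b * b) * (starRingEnd ℂ b * b)
            = (starRingEnd ℂ b * starRingEnd ℂ b) * (b * b) := by ring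
          _ = (a * e) * (starRingEnd ℂ a * e) := by rw [h1, hb2]
          _ = (a * starRingEnd ℂ a) * (e * e) := by ring
          _ = 1 := by rw [haa, he2, mul_one]
      have hreal : starRingEnd ℂ b * b = ((Complex.normSq b : ℝ) : ℂ) := by
        rw [mul_comm, Complex.mul_conj]
      rw [hreal] at hsq ⊢
      have : ((Complex.normSq b : ℝ) : ℂ) ^ 2 = 1 := by rw [sq]; exact hsq
      have hr : (Complex.normSq b) ^ 2 = 1 := by
        exact_mod_cast this
      have hnn : 0 ≤ Complex.normSq b := Complex.normSq_nonneg b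
      have : Complex.normSq b = 1 := by nlinarith
      rw [this]; norm_cast
    -- build the unit c = C b * T (-m)
    have hcb0 : IsUnit (LaurentPolynomial.C b) := (Ne.isUnit hb0).map LaurentPolynomial.C
    set cval : LaurentPolynomial ℂ := LaurentPolynomial.C b * T (-m) with hcval
    have hcunit : IsUnit cval := hcb0.mul (isUnit_T (-m))
    refine ⟨hcunit.unit, ?_⟩
    have hcoe : (hcunit.unit : LaurentPolynomial ℂ) = cval := hcunit.unit_spec
    have hinv : ((hcunit.unit⁻¹ : (LaurentPolynomial ℂ)ˣ) : LaurentPolynomial ℂ)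
        = LaurentPolynomial.C b⁻¹ * T m := by
      apply Units.inv_eq_of_mul_eq_one_right
      rw [hcoe, hcval]
      calc LaurentPolynomial.C b * T (-m) * (LaurentPolynomial.C b⁻¹ * T m)
          = (LaurentPolynomial.C b * LaurentPolynomial.C b⁻¹) * (T (-m) * T m) := by ring
        _ = 1 := by
            rw [← map_mul, mul_inv_cancel₀ hb0, ← T_add, map_one]
            norm_num
    rw [hinv, hcoe, hcval, map_mul, hσC, aux_sigma_T σ hσT, hua, neg_neg]
    -- now a pure computation with C and T
    have hkey : b⁻¹ * (starRingEnd ℂ b * (-1 : ℂ) ^ (-m)) = a := by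
      have hbinv : starRingEnd ℂ b = b⁻¹ := eq_inv_of_mul_eq_one_left hcb
      have hem : ((-1 : ℂ) ^ (-m)) = e := by
        rw [zpow_neg, ← hedef]
        exact inv_eq_of_mul_eq_one_left he2
      rw [hbinv, hem]
      have hbb : b⁻¹ * b⁻¹ = a * e := by
        have : (b * b)⁻¹ = (starRingEnd ℂ a * e)⁻¹ := by rw [hb2]
        rw [mul_inv] at this
        rw [this, mul_inv]
        have hca : (starRingEnd ℂ a)⁻¹ = a :=
          inv_eq_of_mul_eq_one_right (by rw [mul_comm]; exact haa)
        have hce : e⁻¹ = e := inv_eq_of_mul_eq_one_right he2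
        rw [hca, hce]
      calc b⁻¹ * (b⁻¹ * e) = (b⁻¹ * b⁻¹) * e := by ring
        _ = a * (e * e) := by rw [hbb]; ring
        _ = a := by rw [he2, mul_one]
    calc LaurentPolynomial.C a * T k
        = LaurentPolynomial.C (b⁻¹ * (starRingEnd ℂ b * (-1 : ℂ) ^ (-m))) * T k := by rw [hkey]
      _ = LaurentPolynomial.C b⁻¹ * T m
          * (LaurentPolynomial.C (starRingEnd ℂ b)
            * (LaurentPolynomial.C ((-1 : ℂ) ^ (-m)) * T m)) := by
          rw [map_mul, map_mul, hm]
          rw [show m + m = m + m from rfl, T_add]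
          ring
  · -- odd k: contradiction
    exfalso
    obtain ⟨m, hm⟩ := hk
    have hodd : ((-1 : ℂ) ^ k) = -1 := Odd.neg_one_zpow ⟨m, hm⟩
    rw [hodd] at hscal
    have : a * starRingEnd ℂ a = -1 := by
      have := hscal
      linear_combination -this
    rw [Complex.mul_conj] at this
    have hr : (Complex.normSq a : ℝ) = -1 := by exact_mod_cast this
    nlinarith [Complex.normSq_nonneg a]
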